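/- Let $n_1, n_2 > 3/2$ and set $n_3 = \min\{n_1, n_2\}$. There is a constant $C > 0$ such that for all $t \geq 0$ and $x \in \mathbb{R}^3$: $\int_{\mathbb{R}^3}\big(1+\tfrac{|x-y|^2}{1+t}\big)^{-n_1}\,(1+|y|^2)^{-n_2}\,dy \leq C\big(1+\tfrac{|x|^2}{1+t}\big)^{-n_3}$. -/

import Mathlib

/-!
Write `d` for the dimension, `s = 1 + t` and `A = 1 + ‖x‖² / s`. For every `y`, one of `‖x - y‖`,
`‖y‖` is at least `‖x‖ / 2`. In the first case the diffusion factor is at most `4 ^ n₁ A ^ (-n₁)`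
and the algebraic factor is integrable; in the second the algebraic factor is at most
`4 ^ n₂ (1 + ‖x‖²) ^ (-n₂)` and the diffusion factor integrates to `s ^ (d/2)` times a constant.
So the integral is bounded by the sum of the two resulting terms. If `‖x‖² ≤ s`, then `A ≤ 2` and
the trivial bound suffices. If `‖x‖² > s`, then `s / (1 + ‖x‖²) ≤ 2 / A`, and since
`d/2 < min n₁ n₂` this turns `s ^ (d/2) (1 + ‖x‖²) ^ (-n₂)` into `2 ^ min n₁ n₂ A ^ (-min n₁ n₂)`.
-/

open MeasureTheory Module Real

lemma one_le_rpow_mul_rpow_neg {a c n : ℝ} (ha : 0 < a) (hac : a ≤ c) (hn : 0 ≤ n) :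
    1 ≤ c ^ n * a ^ (-n) := by
  rw [rpow_neg ha.le, ← div_eq_mul_inv, ← div_rpow (ha.le.trans hac) ha.le]
  exact one_le_rpow ((one_le_div ha).2 hac) hn

lemma one_add_sq_div_rpow_neg_le {a b s n : ℝ} (ha : 0 ≤ a) (hab : a ≤ 2 * b) (hs : 0 ≤ s)
    (hn : 0 ≤ n) : (1 + b ^ 2 / s) ^ (-n) ≤ 4 ^ n * (1 + a ^ 2 / s) ^ (-n) := by
  have hsq : a ^ 2 / s ≤ 4 * (b ^ 2 / s) := by
    rw [← mul_div_assoc]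
    exact div_le_div_of_nonneg_right (by nlinarith) hs
  calc (1 + b ^ 2 / s) ^ (-n) ≤ ((1 + a ^ 2 / s) / 4) ^ (-n) :=
        rpow_le_rpow_of_nonpos (by positivity) (by linarith) (by linarith)
    _ = 4 ^ n * (1 + a ^ 2 / s) ^ (-n) := by
        rw [div_rpow (by positivity) (by norm_num), rpow_neg (by norm_num : (0 : ℝ) ≤ 4)]
        field_simp

lemma rpow_mul_one_add_rpow_neg_le {d s X m n : ℝ} (hs : 1 ≤ s) (hsX : s ≤ X) (hdm : d ≤ m)
    (hm : 0 ≤ m) (hmn : m ≤ n) :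
    s ^ d * (1 + X) ^ (-n) ≤ 2 ^ m * (1 + X / s) ^ (-m) := by
  have hX : 0 < 1 + X := by linarith
  have hA : 0 < 1 + X / s := by
    have : 0 ≤ X / s := div_nonneg (by linarith) (by linarith)
    linarith
  have hratio : s / (1 + X) ≤ 2 / (1 + X / s) := by
    rw [div_le_div_iff₀ hX hA, mul_add, mul_div_cancel₀ X (by positivity : s ≠ 0)]
    linarith
  calc s ^ d * (1 + X) ^ (-n) ≤ s ^ m * (1 + X) ^ (-m) := by
        gcongr ?_ * ?_
        · exact rpow_le_rpow_of_exponent_le hs hdm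
        · exact rpow_le_rpow_of_exponent_le (by linarith) (by linarith)
    _ = (s / (1 + X)) ^ m := by rw [div_rpow (by linarith) hX.le, rpow_neg hX.le, div_eq_mul_inv]
    _ ≤ (2 / (1 + X / s)) ^ m := rpow_le_rpow (by positivity) hratio hm
    _ = 2 ^ m * (1 + X / s) ^ (-m) := by
        rw [div_rpow (by norm_num) hA.le, rpow_neg hA.le, div_eq_mul_inv]

lemma norm_le_two_mul_norm_sub_or_norm {E : Type*} [SeminormedAddCommGroup E] (x y : E) :
    ‖x‖ ≤ 2 * ‖x - y‖ ∨ ‖x‖ ≤ 2 * ‖y‖ := by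
  by_contra! h
  linarith [norm_sub_norm_le x y]

lemma rpow_neg_mul_rpow_neg_le_add {E : Type*} [SeminormedAddCommGroup E] {s n₁ n₂ : ℝ}
    (hs : 0 ≤ s) (hn₁ : 0 ≤ n₁) (hn₂ : 0 ≤ n₂) (x y : E) :
    (1 + ‖x - y‖ ^ 2 / s) ^ (-n₁) * (1 + ‖y‖ ^ 2) ^ (-n₂) ≤
      4 ^ n₁ * (1 + ‖x‖ ^ 2 / s) ^ (-n₁) * (1 + ‖y‖ ^ 2) ^ (-n₂) +
        4 ^ n₂ * (1 + ‖x‖ ^ 2) ^ (-n₂) * (1 + ‖x - y‖ ^ 2 / s) ^ (-n₁) := by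
  rcases norm_le_two_mul_norm_sub_or_norm x y with h | h
  · have hdiffusion := one_add_sq_div_rpow_neg_le (norm_nonneg x) h hs hn₁
    exact le_add_of_le_of_nonneg (mul_le_mul_of_nonneg_right hdiffusion (by positivity))
      (by positivity)
  · have halgebraic := one_add_sq_div_rpow_neg_le (norm_nonneg x) h zero_le_one hn₂
    simp only [div_one] at halgebraic
    exact le_add_of_nonneg_of_le (by positivity)
      ((mul_le_mul_of_nonneg_left halgebraic (by positivity)).trans_eq (mul_comm _ _))

section

variable {E : Type*} [NormedAddCommGroup E] [NormedSpace ℝ E]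

lemma norm_sq_div_eq_norm_inv_sqrt_smul_sq {s : ℝ} (hs : 0 ≤ s) (y : E) :
    ‖y‖ ^ 2 / s = ‖(√s)⁻¹ • y‖ ^ 2 := by
  rw [norm_smul, norm_inv, norm_of_nonneg (sqrt_nonneg s), mul_pow, inv_pow, sq_sqrt hs,
    div_eq_inv_mul]

variable [FiniteDimensional ℝ E] [MeasurableSpace E] [BorelSpace E] (μ : Measure E)
  [μ.IsAddHaarMeasure]

lemma integrable_one_add_norm_sq_rpow_neg {n : ℝ} (hn : (finrank ℝ E : ℝ) / 2 < n) :
    Integrable (fun y : E => (1 + ‖y‖ ^ 2) ^ (-n)) μ := by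
  have h := integrable_rpow_neg_one_add_norm_sq (μ := μ) (r := 2 * n) (by linarith)
  rwa [neg_div, mul_div_cancel_left₀ n two_ne_zero] at h

lemma integrable_one_add_norm_sub_sq_div_rpow_neg {n s : ℝ} (hn : (finrank ℝ E : ℝ) / 2 < n)
    (hs : 0 < s) (x : E) : Integrable (fun y : E => (1 + ‖x - y‖ ^ 2 / s) ^ (-n)) μ := by
  have h := (integrable_comp_smul_iff μ (fun z : E => (1 + ‖z‖ ^ 2) ^ (-n))
    (inv_ne_zero (sqrt_pos.2 hs).ne')).2 (integrable_one_add_norm_sq_rpow_neg μ hn)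
  simp only [← norm_sq_div_eq_norm_inv_sqrt_smul_sq hs.le] at h
  exact h.comp_sub_left x

lemma integral_one_add_norm_sub_sq_div_rpow_neg {n s : ℝ} (hs : 0 ≤ s) (x : E) :
    ∫ y, (1 + ‖x - y‖ ^ 2 / s) ^ (-n) ∂μ =
      s ^ ((finrank ℝ E : ℝ) / 2) * ∫ y, (1 + ‖y‖ ^ 2) ^ (-n) ∂μ := by
  rw [integral_sub_left_eq_self (fun z : E => (1 + ‖z‖ ^ 2 / s) ^ (-n)) μ x]
  simp only [norm_sq_div_eq_norm_inv_sqrt_smul_sq hs]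
  rw [Measure.integral_comp_inv_smul_of_nonneg μ (fun z : E => (1 + ‖z‖ ^ 2) ^ (-n))
    (sqrt_nonneg s), smul_eq_mul, sqrt_eq_rpow, ← rpow_natCast, ← rpow_mul hs]
  ring_nf

lemma integral_rpow_neg_mul_rpow_neg_le_integral {n₁ n₂ s : ℝ} (hn₁ : 0 ≤ n₁)
    (hn₂ : (finrank ℝ E : ℝ) / 2 < n₂) (hs : 0 ≤ s) (x : E) :
    ∫ y, (1 + ‖x - y‖ ^ 2 / s) ^ (-n₁) * (1 + ‖y‖ ^ 2) ^ (-n₂) ∂μ ≤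
      ∫ y, (1 + ‖y‖ ^ 2) ^ (-n₂) ∂μ := by
  refine integral_mono_of_nonneg (.of_forall fun y => by positivity)
    (integrable_one_add_norm_sq_rpow_neg μ hn₂) (.of_forall fun y => ?_)
  have : (1 + ‖x - y‖ ^ 2 / s) ^ (-n₁) ≤ 1 :=
    rpow_le_one_of_one_le_of_nonpos (by simp only [le_add_iff_nonneg_right]; positivity)
      (by linarith)
  exact mul_le_of_le_one_left (by positivity) this

lemma integral_rpow_neg_mul_rpow_neg_le_add {n₁ n₂ s : ℝ} (hn₁ : (finrank ℝ E : ℝ) / 2 < n₁)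
    (hn₂ : (finrank ℝ E : ℝ) / 2 < n₂) (hs : 0 < s) (x : E) :
    ∫ y, (1 + ‖x - y‖ ^ 2 / s) ^ (-n₁) * (1 + ‖y‖ ^ 2) ^ (-n₂) ∂μ ≤
      4 ^ n₁ * (1 + ‖x‖ ^ 2 / s) ^ (-n₁) * ∫ y, (1 + ‖y‖ ^ 2) ^ (-n₂) ∂μ +
        4 ^ n₂ * (1 + ‖x‖ ^ 2) ^ (-n₂) *
          (s ^ ((finrank ℝ E : ℝ) / 2) * ∫ y, (1 + ‖y‖ ^ 2) ^ (-n₁) ∂μ) := by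
  have hd : (0 : ℝ) ≤ (finrank ℝ E : ℝ) / 2 := by positivity
  have hle := rpow_neg_mul_rpow_neg_le_add hs.le (hd.trans hn₁.le) (hd.trans hn₂.le) x
  have hmajorant : Integrable (fun y =>
      4 ^ n₁ * (1 + ‖x‖ ^ 2 / s) ^ (-n₁) * (1 + ‖y‖ ^ 2) ^ (-n₂) +
        4 ^ n₂ * (1 + ‖x‖ ^ 2) ^ (-n₂) * (1 + ‖x - y‖ ^ 2 / s) ^ (-n₁)) μ :=
    ((integrable_one_add_norm_sq_rpow_neg μ hn₂).const_mul _).add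
      ((integrable_one_add_norm_sub_sq_div_rpow_neg μ hn₁ hs x).const_mul _)
  calc ∫ y, (1 + ‖x - y‖ ^ 2 / s) ^ (-n₁) * (1 + ‖y‖ ^ 2) ^ (-n₂) ∂μ
      ≤ ∫ y, (4 ^ n₁ * (1 + ‖x‖ ^ 2 / s) ^ (-n₁) * (1 + ‖y‖ ^ 2) ^ (-n₂) +
          4 ^ n₂ * (1 + ‖x‖ ^ 2) ^ (-n₂) * (1 + ‖x - y‖ ^ 2 / s) ^ (-n₁)) ∂μ :=
        integral_mono_of_nonneg (.of_forall fun y => by positivity) hmajorant (.of_forall hle)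
    _ = _ := by
        rw [integral_add ((integrable_one_add_norm_sq_rpow_neg μ hn₂).const_mul _)
          ((integrable_one_add_norm_sub_sq_div_rpow_neg μ hn₁ hs x).const_mul _),
          integral_const_mul, integral_const_mul,
          integral_one_add_norm_sub_sq_div_rpow_neg μ hs.le x]

theorem integral_rpow_neg_mul_rpow_neg_le_mul {n₁ n₂ s : ℝ} (hn₁ : (finrank ℝ E : ℝ) / 2 < n₁)
    (hn₂ : (finrank ℝ E : ℝ) / 2 < n₂) (hs : 1 ≤ s) (x : E) :
    ∫ y, (1 + ‖x - y‖ ^ 2 / s) ^ (-n₁) * (1 + ‖y‖ ^ 2) ^ (-n₂) ∂μ ≤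
      ((2 ^ min n₁ n₂ + 4 ^ n₁) * ∫ y, (1 + ‖y‖ ^ 2) ^ (-n₂) ∂μ +
        2 ^ min n₁ n₂ * 4 ^ n₂ * ∫ y, (1 + ‖y‖ ^ 2) ^ (-n₁) ∂μ) *
          (1 + ‖x‖ ^ 2 / s) ^ (-min n₁ n₂) := by
  set m := min n₁ n₂
  set K₁ := ∫ y, (1 + ‖y‖ ^ 2) ^ (-n₁) ∂μ
  set K₂ := ∫ y, (1 + ‖y‖ ^ 2) ^ (-n₂) ∂μ
  set A := 1 + ‖x‖ ^ 2 / s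
  have hd : (0 : ℝ) ≤ (finrank ℝ E : ℝ) / 2 := by positivity
  have hm : (finrank ℝ E : ℝ) / 2 < m := lt_min hn₁ hn₂
  have hK₁ : 0 ≤ K₁ := integral_nonneg fun y => by positivity
  have hK₂ : 0 ≤ K₂ := integral_nonneg fun y => by positivity
  have hA : 1 ≤ A := le_add_of_nonneg_right (by positivity)
  rcases le_or_gt (‖x‖ ^ 2) s with hx | hx
  · have hA2 : A ≤ 2 := by
      have : ‖x‖ ^ 2 / s ≤ 1 := (div_le_one (by linarith)).2 hx
      linarith
    have hone := one_le_rpow_mul_rpow_neg (by linarith) hA2 (hd.trans hm.le)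
    calc _ ≤ K₂ :=
          integral_rpow_neg_mul_rpow_neg_le_integral μ (hd.trans hn₁.le) hn₂ (by linarith) x
      _ ≤ 2 ^ m * A ^ (-m) * K₂ := le_mul_of_one_le_left hK₂ hone
      _ ≤ _ := by
        have : 0 ≤ (4 ^ n₁ * K₂ + 2 ^ m * 4 ^ n₂ * K₁) * A ^ (-m) := by positivity
        nlinarith
  · have h₁ : A ^ (-n₁) ≤ A ^ (-m) := rpow_le_rpow_of_exponent_le hA (by simp [m])
    have h₂ := rpow_mul_one_add_rpow_neg_le (by linarith) hx.le hm.le (hd.trans hm.le)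
      (min_le_right n₁ n₂)
    calc _ ≤ _ := integral_rpow_neg_mul_rpow_neg_le_add μ hn₁ hn₂ (by linarith) x
      _ = 4 ^ n₁ * A ^ (-n₁) * K₂ + 4 ^ n₂ * K₁ *
            (s ^ ((finrank ℝ E : ℝ) / 2) * (1 + ‖x‖ ^ 2) ^ (-n₂)) := by ring
      _ ≤ 4 ^ n₁ * A ^ (-m) * K₂ + 4 ^ n₂ * K₁ * (2 ^ m * A ^ (-m)) := by gcongr
      _ ≤ _ := by
        have : 0 ≤ 2 ^ m * K₂ * A ^ (-m) := by positivity
        nlinarith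

end

theorem stmt_10 (n₁ n₂ : ℝ) (h₁ : 3 / 2 < n₁) (h₂ : 3 / 2 < n₂) :
    ∃ C > 0, ∀ (t : ℝ), 0 ≤ t → ∀ x : EuclideanSpace ℝ (Fin 3),
      (∫ y : EuclideanSpace ℝ (Fin 3),
          (1 + ‖x - y‖ ^ 2 / (1 + t)) ^ (-n₁) * (1 + ‖y‖ ^ 2) ^ (-n₂))
        ≤ C * (1 + ‖x‖ ^ 2 / (1 + t)) ^ (-(min n₁ n₂)) := by
  have hdim : (finrank ℝ (EuclideanSpace ℝ (Fin 3)) : ℝ) / 2 = 3 / 2 := by simp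
  set K₁ := ∫ y : EuclideanSpace ℝ (Fin 3), (1 + ‖y‖ ^ 2) ^ (-n₁)
  set K₂ := ∫ y : EuclideanSpace ℝ (Fin 3), (1 + ‖y‖ ^ 2) ^ (-n₂)
  set C := (2 ^ min n₁ n₂ + 4 ^ n₁) * K₂ + 2 ^ min n₁ n₂ * 4 ^ n₂ * K₁
  have hC : 0 ≤ C := by
    have : 0 ≤ K₁ := integral_nonneg fun y => by positivity
    have : 0 ≤ K₂ := integral_nonneg fun y => by positivity
    positivity
  refine ⟨C + 1, by positivity, fun t ht x => ?_⟩
  calc _ ≤ C * (1 + ‖x‖ ^ 2 / (1 + t)) ^ (-(min n₁ n₂)) :=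
        integral_rpow_neg_mul_rpow_neg_le_mul volume (hdim ▸ h₁) (hdim ▸ h₂) (by linarith) x
    _ ≤ _ := by gcongr; linarith
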